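/- The right-hand side R = {∞₁} × ℕ of the plank J is not C*-embedded in J: the function (∞₁, n) ↦ n mod 2, which is a bounded continuous function on R (R being discrete), has no continuous extension to J. -/

import Mathlib

open Set Topology

/-- A subset `A` of a topological space `X` is *C-embedded* if every continuous
real-valued function on `A` extends to a continuous real-valued function on `X`. -/
def CEmbedded {X : Type*} [TopologicalSpace X] (A : Set X) : Prop :=
  ∀ f : C(A, ℝ), ∃ g : C(X, ℝ), ∀ a : A, g ↑a = f a

/-- A subset `A` of a topological space `X` is *C*-embedded* if every *bounded* continuous
real-valued function on `A` extends to a continuous real-valued function on `X`. -/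
def CstarEmbedded {X : Type*} [TopologicalSpace X] (A : Set X) : Prop :=
  ∀ f : C(A, ℝ), (∃ M : ℝ, ∀ a : A, |f a| ≤ M) → ∃ g : C(X, ℝ), ∀ a : A, g ↑a = f a

/-- `ω₁`, the set of countable ordinals, as a type carrying the discrete topology. -/
def W1 : Type := (Cardinal.aleph 1).ord.ToType

instance : TopologicalSpace W1 := ⊥
instance : DiscreteTopology W1 := ⟨rfl⟩

/-- The plank `J`: the product of the one-point compactifications of the discrete spaces
`ω₁` and `ℕ`, with the corner point `(∞₁, ∞₀)` removed. -/
abbrev J : Type := {p : OnePoint W1 × OnePoint ℕ // p ≠ (OnePoint.infty, OnePoint.infty)}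

/-- The point `(α, n)` of `J`, for `α ∈ ω₁` and `n ∈ ℕ`. -/
def Jmk (α : W1) (n : ℕ) : J :=
  ⟨(↑α, ↑n), fun h => OnePoint.coe_ne_infty α (congrArg Prod.fst h)⟩

/-- The point `(α, ∞₀)` of the top line `T = ω₁ × {∞₀}` of `J`. -/
def JmkTop (α : W1) : J :=
  ⟨(↑α, OnePoint.infty), fun h => OnePoint.coe_ne_infty α (congrArg Prod.fst h)⟩

/-- The point `(∞₁, n)` of the right-hand side `R = {∞₁} × ℕ` of `J`. -/
def JmkRight (n : ℕ) : J :=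
  ⟨(OnePoint.infty, ↑n), fun h => OnePoint.coe_ne_infty n (congrArg Prod.snd h)⟩

/-
Suppose `g : J → ℝ` is continuous with `g (∞₁, n) = n mod 2`. For each `n`, continuity at
`(∞₁, n)` makes `|g (α, n) - n mod 2| < 1/4` for all but finitely many `α`. A countable union of
finite sets does not exhaust the uncountable `ω₁`, so some `α` satisfies this for every `n`. But
then `g (α, n)` oscillates between values near `0` and near `1`, although it converges to
`g (α, ∞₀)` as `n → ∞`.
-/

open Filter

theorem exists_forall_of_forall_eventually_cofinite {ι α : Type*} [Countable ι] [Uncountable α]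
    {p : ι → α → Prop} (h : ∀ i, ∀ᶠ a in cofinite, p i a) : ∃ a, ∀ i, p i a := by
  by_contra! hbad
  have hcount : (⋃ i, {a | ¬ p i a}).Countable :=
    Set.countable_iUnion fun i => (h i).countable
  exact not_countable_univ (hcount.mono fun a _ => Set.mem_iUnion.2 (hbad a))

theorem not_tendsto_of_forall_abs_sub_mod_two_lt {u : ℕ → ℝ}
    (hu : ∀ n, |u n - ((n % 2 : ℕ) : ℝ)| < 1 / 4) (L : ℝ) : ¬ Tendsto u atTop (𝓝 L) := by
  intro hL
  obtain ⟨N, hN⟩ := Metric.tendsto_atTop.1 hL (1 / 4) (by norm_num)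
  have heven := hu (2 * N)
  have hodd := hu (2 * N + 1)
  have hevenL := hN (2 * N) (by omega)
  have hoddL := hN (2 * N + 1) (by omega)
  rw [show 2 * N % 2 = 0 by omega] at heven
  rw [show (2 * N + 1) % 2 = 1 by omega] at hodd
  rw [Real.dist_eq] at hevenL hoddL
  push_cast at heven hodd
  rw [abs_lt] at heven hodd hevenL hoddL
  linarith

theorem OnePoint.tendsto_coe_cofinite_infty {X : Type*} [TopologicalSpace X]
    [DiscreteTopology X] : Tendsto ((↑) : X → OnePoint X) cofinite (𝓝 OnePoint.infty) := by
  simpa [cocompact_eq_cofinite] using OnePoint.tendsto_coe_infty (X := X)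

theorem OnePoint.isOpen_singleton_coe {X : Type*} [TopologicalSpace X] [DiscreteTopology X]
    (x : X) : IsOpen ({(x : OnePoint X)} : Set (OnePoint X)) := by
  simpa using OnePoint.isOpen_image_coe.2 (isOpen_discrete {x})

theorem DiscreteTopology.of_continuous_injective_isOpen_singleton {X Y : Type*}
    [TopologicalSpace X] [TopologicalSpace Y] {f : X → Y} (hf : Continuous f)
    (hinj : Function.Injective f) (hopen : ∀ x, IsOpen {f x}) : DiscreteTopology X := by
  refine discreteTopology_iff_isOpen_singleton.2 fun x => ?_
  rw [← hinj.preimage_image {x}, Set.image_singleton]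
  exact (hopen x).preimage hf

theorem CstarEmbedded.exists_extension_of_range {X ι : Type*} [TopologicalSpace X] {e : ι → X}
    (he : Function.Injective e) [DiscreteTopology (Set.range e)]
    (h : CstarEmbedded (Set.range e)) (u : ι → ℝ) (hu : ∃ M, ∀ i, |u i| ≤ M) :
    ∃ g : C(X, ℝ), ∀ i, g (e i) = u i := by
  let f : C(Set.range e, ℝ) := ⟨fun a => u ((Equiv.ofInjective e he).symm a),
    continuous_of_discreteTopology⟩
  obtain ⟨M, hM⟩ := hu
  obtain ⟨g, hg⟩ := h f ⟨M, fun a => hM _⟩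
  exact ⟨g, fun i => (hg ⟨e i, i, rfl⟩).trans (by simp [f, Equiv.ofInjective_symm_apply])⟩

instance : Uncountable W1 :=
  Cardinal.aleph0_lt_mk_iff.1 <|
    Cardinal.aleph0_lt_aleph_one.trans_eq (Cardinal.mk_ord_toType (Cardinal.aleph 1)).symm

theorem JmkRight_injective : Function.Injective JmkRight := fun m n hmn => by
  simpa [JmkRight] using congrArg (fun p : J => p.1.2) hmn

instance : DiscreteTopology (Set.range JmkRight) := by
  refine DiscreteTopology.of_continuous_injective_isOpen_singleton
    (f := fun p : Set.range JmkRight => p.1.1.2) (by fun_prop) ?_ ?_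
  · rintro ⟨_, m, rfl⟩ ⟨_, n, rfl⟩ hmn
    simpa [JmkRight] using hmn
  · rintro ⟨_, n, rfl⟩
    exact OnePoint.isOpen_singleton_coe n

theorem tendsto_Jmk_cofinite (n : ℕ) :
    Tendsto (fun α => Jmk α n) cofinite (𝓝 (JmkRight n)) :=
  tendsto_subtype_rng.2 <| OnePoint.tendsto_coe_cofinite_infty.prodMk_nhds tendsto_const_nhds

theorem tendsto_Jmk_atTop (α : W1) :
    Tendsto (fun n => Jmk α n) atTop (𝓝 (JmkTop α)) :=
  tendsto_subtype_rng.2 <| tendsto_const_nhds.prodMk_nhds <|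
    Nat.cofinite_eq_atTop ▸ OnePoint.tendsto_coe_cofinite_infty

theorem not_exists_extension_mod_two :
    ¬ ∃ g : C(J, ℝ), ∀ n : ℕ, g (JmkRight n) = ((n % 2 : ℕ) : ℝ) := by
  rintro ⟨g, hg⟩
  have hnear : ∀ n, ∀ᶠ α in cofinite, |g (Jmk α n) - ((n % 2 : ℕ) : ℝ)| < 1 / 4 := fun n => by
    have := (g.continuous.tendsto _).comp (tendsto_Jmk_cofinite n)
    rw [Function.comp_def, hg n] at this
    simpa [Real.dist_eq] using this.eventually (Metric.ball_mem_nhds _ (by norm_num))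
  obtain ⟨α, hα⟩ := exists_forall_of_forall_eventually_cofinite hnear
  exact not_tendsto_of_forall_abs_sub_mod_two_lt hα _
    ((g.continuous.tendsto _).comp (tendsto_Jmk_atTop α))

/-- The right-hand side `R = {∞₁} × ℕ` is not C*-embedded in `J`: the
function `(∞₁, n) ↦ n mod 2` (a bounded continuous function on the discrete space `R`) has
no continuous extension to `J`. -/
theorem statement5 :
    ¬ CstarEmbedded (Set.range JmkRight) ∧
    ¬ ∃ g : C(J, ℝ), ∀ n : ℕ, g (JmkRight n) = ((n % 2 : ℕ) : ℝ) := by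
  refine ⟨fun h => not_exists_extension_mod_two ?_, not_exists_extension_mod_two⟩
  refine h.exists_extension_of_range JmkRight_injective _ ⟨1, fun n => ?_⟩
  rw [abs_of_nonneg (by positivity)]
  exact_mod_cast Nat.le_of_lt_succ (Nat.mod_lt n two_pos)
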